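/- arXiv:1605.01091 — 4 statements merged into one kernel-verified Lean document; each statement's English description precedes it below -/
import Mathlib

section
/- The effective resistance matrix uniquely determines the graph: the pseudoinverse of the Laplacian can be recovered from the effective resistance matrix R via L† = −(1/2)[R − (1/n)(RJ + JR) + (1/n²) JRJ]. Consequently, if two connected weighted graphs on the same vertex set have equal effective resistance matrices, then they are equal. -/
open Matrix Finset

/-- `A` is a (weighted) adjacency matrix: symmetric, nonnegative, no self-loops. -/
def IsAdjMat {n : ℕ} (A : Matrix (Fin n) (Fin n) ℝ) : Prop :=
  A.IsSymm ∧ (∀ i j, 0 ≤ A i j) ∧ ∀ i, A i i = 0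

/-- Combinatorial Laplacian `L = D - A`. -/
def lap {n : ℕ} (A : Matrix (Fin n) (Fin n) ℝ) : Matrix (Fin n) (Fin n) ℝ :=
  Matrix.diagonal (fun i => ∑ j, A i j) - A

/-- Connectivity: the kernel of the Laplacian is spanned by the all-ones vector. -/
def IsConnectedLap {n : ℕ} (L : Matrix (Fin n) (Fin n) ℝ) : Prop :=
  ∀ v : Fin n → ℝ, L.mulVec v = 0 → ∃ c : ℝ, v = fun _ => c

/-- `Ld` is the Moore–Penrose pseudoinverse of `L`. -/
def IsMoorePenrose {n : ℕ} (L Ld : Matrix (Fin n) (Fin n) ℝ) : Prop :=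
  L * Ld * L = L ∧ Ld * L * Ld = Ld ∧ (L * Ld)ᵀ = L * Ld ∧ (Ld * L)ᵀ = Ld * L

/-- Effective resistance `R_ij = L†_ii + L†_jj - 2 L†_ij`. -/
def effR {n : ℕ} (Ld : Matrix (Fin n) (Fin n) ℝ) (i j : Fin n) : ℝ :=
  Ld i i + Ld j j - 2 * Ld i j

/-- The all-ones matrix `J = 1·1ᵀ`. -/
def Jmat (n : ℕ) : Matrix (Fin n) (Fin n) ℝ := Matrix.of fun _ _ => 1

/-- The matrix of effective resistances. -/
def Rmat {n : ℕ} (Ld : Matrix (Fin n) (Fin n) ℝ) : Matrix (Fin n) (Fin n) ℝ :=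
  Matrix.of fun i j => effR Ld i j

lemma mp_unique {n : ℕ} {L B C : Matrix (Fin n) (Fin n) ℝ}
    (hB : IsMoorePenrose L B) (hC : IsMoorePenrose L C) : B = C := by
  obtain ⟨hB1, hB2, hB3, hB4⟩ := hB
  obtain ⟨hC1, hC2, hC3, hC4⟩ := hC
  have hLB : L * B = L * C := by
    calc L * B = (L * B)ᵀ := hB3.symm
      _ = Bᵀ * Lᵀ := by rw [Matrix.transpose_mul]
      _ = Bᵀ * (L * C * L)ᵀ := by rw [hC1]
      _ = (Bᵀ * Lᵀ) * (Cᵀ * Lᵀ) := by simp only [Matrix.transpose_mul, Matrix.mul_assoc]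
      _ = (L * B)ᵀ * (L * C)ᵀ := by rw [Matrix.transpose_mul L B, Matrix.transpose_mul L C]
      _ = (L * B) * (L * C) := by rw [hB3, hC3]
      _ = (L * B * L) * C := by simp only [Matrix.mul_assoc]
      _ = L * C := by rw [hB1]
  have hBL : B * L = C * L := by
    calc B * L = (B * L)ᵀ := hB4.symm
      _ = Lᵀ * Bᵀ := by rw [Matrix.transpose_mul]
      _ = (L * C * L)ᵀ * Bᵀ := by rw [hC1]
      _ = (Lᵀ * Cᵀ) * (Lᵀ * Bᵀ) := by simp only [Matrix.transpose_mul, Matrix.mul_assoc]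
      _ = (C * L)ᵀ * (B * L)ᵀ := by rw [Matrix.transpose_mul C L, Matrix.transpose_mul B L]
      _ = (C * L) * (B * L) := by rw [hC4, hB4]
      _ = C * (L * B) * L := by simp only [Matrix.mul_assoc]
      _ = C * (L * C) * L := by rw [hLB]
      _ = C * (L * C * L) := by simp only [Matrix.mul_assoc]
      _ = C * L := by rw [hC1]
  calc B = B * L * B := hB2.symm
    _ = B * (L * B) := by rw [Matrix.mul_assoc]
    _ = B * (L * C) := by rw [hLB]
    _ = (B * L) * C := by rw [Matrix.mul_assoc]
    _ = (C * L) * C := by rw [hBL]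
    _ = C := hC2

lemma mp_flip {n : ℕ} {L Ld : Matrix (Fin n) (Fin n) ℝ}
    (h : IsMoorePenrose L Ld) : IsMoorePenrose Ld L :=
  ⟨h.2.1, h.1, h.2.2.2, h.2.2.1⟩

lemma lap_transpose {n : ℕ} {A : Matrix (Fin n) (Fin n) ℝ} (hA : A.IsSymm) :
    (lap A)ᵀ = lap A := by
  simp [lap, Matrix.transpose_sub, Matrix.diagonal_transpose, hA.eq]

lemma lap_mulVec_one {n : ℕ} (A : Matrix (Fin n) (Fin n) ℝ) :
    (lap A).mulVec (fun _ => (1 : ℝ)) = 0 := by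
  funext i
  simp [lap, Matrix.mulVec, dotProduct, Matrix.sub_apply,
    Matrix.diagonal_apply, Finset.sum_sub_distrib, Finset.sum_ite_eq]

lemma mp_transpose {n : ℕ} {L Ld : Matrix (Fin n) (Fin n) ℝ} (hL : Lᵀ = L)
    (h : IsMoorePenrose L Ld) : IsMoorePenrose L Ldᵀ := by
  obtain ⟨h1, h2, h3, h4⟩ := h
  refine ⟨?_, ?_, ?_, ?_⟩
  · have e := congrArg Matrix.transpose h1
    simp only [Matrix.transpose_mul, hL] at e
    simpa [Matrix.mul_assoc] using e
  · have e := congrArg Matrix.transpose h2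
    simp only [Matrix.transpose_mul, hL] at e
    simpa [Matrix.mul_assoc] using e
  · have e : L * Ldᵀ = (Ld * L)ᵀ := by rw [Matrix.transpose_mul, hL]
    rw [e, Matrix.transpose_transpose, h4]
  · have e : Ldᵀ * L = (L * Ld)ᵀ := by rw [Matrix.transpose_mul, hL]
    rw [e, Matrix.transpose_transpose, h3]

lemma Ld_symm {n : ℕ} {L Ld : Matrix (Fin n) (Fin n) ℝ} (hL : Lᵀ = L)
    (h : IsMoorePenrose L Ld) : Ldᵀ = Ld :=
  mp_unique (mp_transpose hL h) h

lemma Ld_row_sum {n : ℕ} {L Ld : Matrix (Fin n) (Fin n) ℝ} (hL : Lᵀ = L)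
    (hL1 : L.mulVec (fun _ => (1 : ℝ)) = 0) (h : IsMoorePenrose L Ld) :
    ∀ i, ∑ j, Ld i j = 0 := by
  obtain ⟨h1, h2, h3, h4⟩ := h
  have hLLd : L * Ld = Ldᵀ * L := by
    rw [← h3, Matrix.transpose_mul, hL]
  have step : (L * Ld).mulVec (fun _ => (1 : ℝ)) = 0 := by
    rw [hLLd, ← Matrix.mulVec_mulVec, hL1, Matrix.mulVec_zero]
  have key : Ld.mulVec (fun _ => (1 : ℝ)) = 0 := by
    calc Ld.mulVec (fun _ => (1 : ℝ))
        = (Ld * (L * Ld)).mulVec (fun _ => (1 : ℝ)) := by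
          rw [← Matrix.mul_assoc, h2]
      _ = Ld.mulVec ((L * Ld).mulVec (fun _ => (1 : ℝ))) :=
          (Matrix.mulVec_mulVec _ _ _).symm
      _ = 0 := by rw [step, Matrix.mulVec_zero]
  intro i
  have := congrFun key i
  simpa [Matrix.mulVec, dotProduct] using this

lemma key_formula {n : ℕ} (hn : 0 < n) (Ld : Matrix (Fin n) (Fin n) ℝ)
    (hrow : ∀ i, ∑ j, Ld i j = 0) (hcol : ∀ j, ∑ i, Ld i j = 0) :
    Ld = (-(1 / 2 : ℝ)) •
      (Rmat Ld - ((1 : ℝ) / n) • (Rmat Ld * Jmat n + Jmat n * Rmat Ld)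
        + ((1 : ℝ) / n ^ 2) • (Jmat n * Rmat Ld * Jmat n)) := by
  have hn' : ((n : ℝ)) ≠ 0 := Nat.cast_ne_zero.mpr hn.ne'
  have e1 : ∀ i j, (Rmat Ld * Jmat n) i j = n * Ld i i + ∑ k, Ld k k := by
    intro i j
    rw [Matrix.mul_apply]
    simp only [Rmat, effR, Jmat, Matrix.of_apply, mul_one]
    rw [Finset.sum_sub_distrib, Finset.sum_add_distrib, Finset.sum_const,
      Finset.card_univ, Fintype.card_fin, ← Finset.mul_sum, hrow i, nsmul_eq_mul]
    ring
  have e2 : ∀ i j, (Jmat n * Rmat Ld) i j = (∑ k, Ld k k) + n * Ld j j := by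
    intro i j
    rw [Matrix.mul_apply]
    simp only [Rmat, effR, Jmat, Matrix.of_apply, one_mul]
    rw [Finset.sum_sub_distrib, Finset.sum_add_distrib, Finset.sum_const,
      Finset.card_univ, Fintype.card_fin, ← Finset.mul_sum, hcol j, nsmul_eq_mul]
    ring
  have e3 : ∀ i j, (Jmat n * Rmat Ld * Jmat n) i j = 2 * (n * ∑ k, Ld k k) := by
    intro i j
    have h : ∀ k, (Jmat n * Rmat Ld) i k * Jmat n k j
        = (∑ l, Ld l l) + n * Ld k k := by
      intro k; rw [e2 i k]; simp [Jmat]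
    rw [Matrix.mul_apply]
    simp only [h]
    rw [Finset.sum_add_distrib, Finset.sum_const, ← Finset.mul_sum,
      Finset.card_univ, Fintype.card_fin, nsmul_eq_mul]
    ring
  funext i j
  simp only [Matrix.smul_apply, Matrix.add_apply, Matrix.sub_apply, smul_eq_mul,
    e1, e2, e3]
  simp only [Rmat, effR, Matrix.of_apply]
  field_simp
  ring

/-- The effective resistance matrix uniquely determines the graph:
`L† = -(1/2)[R - (1/n)(RJ + JR) + (1/n²) JRJ]`; consequently two connected weighted
graphs on the same vertex set with equal effective resistance matrices are equal. -/
theorem resistance_matrix_determines_graph (n : ℕ) (hn : 0 < n) :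
    (∀ (A L Ld : Matrix (Fin n) (Fin n) ℝ),
        IsAdjMat A → L = lap A → IsConnectedLap L → IsMoorePenrose L Ld →
        Ld = (-(1 / 2 : ℝ)) •
          (Rmat Ld - ((1 : ℝ) / n) • (Rmat Ld * Jmat n + Jmat n * Rmat Ld)
            + ((1 : ℝ) / n ^ 2) • (Jmat n * Rmat Ld * Jmat n)))
    ∧ ∀ (A₁ L₁ Ld₁ A₂ L₂ Ld₂ : Matrix (Fin n) (Fin n) ℝ),
        IsAdjMat A₁ → L₁ = lap A₁ → IsConnectedLap L₁ → IsMoorePenrose L₁ Ld₁ →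
        IsAdjMat A₂ → L₂ = lap A₂ → IsConnectedLap L₂ → IsMoorePenrose L₂ Ld₂ →
        Rmat Ld₁ = Rmat Ld₂ → A₁ = A₂ := by
  have main : ∀ (A L Ld : Matrix (Fin n) (Fin n) ℝ),
      IsAdjMat A → L = lap A → IsMoorePenrose L Ld →
      Ld = (-(1 / 2 : ℝ)) •
        (Rmat Ld - ((1 : ℝ) / n) • (Rmat Ld * Jmat n + Jmat n * Rmat Ld)
          + ((1 : ℝ) / n ^ 2) • (Jmat n * Rmat Ld * Jmat n)) := by
    intro A L Ld hA hL hMP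
    subst hL
    have hs : (lap A)ᵀ = lap A := lap_transpose hA.1
    have hrow := Ld_row_sum hs (lap_mulVec_one A) hMP
    have hsym := Ld_symm hs hMP
    have hcol : ∀ j, ∑ i, Ld i j = 0 := by
      intro j
      have h : ∑ i, Ld i j = ∑ i, Ld j i := by
        refine Finset.sum_congr rfl fun i _ => ?_
        exact (congrFun (congrFun hsym i) j).symm
      rw [h, hrow j]
    exact key_formula hn Ld hrow hcol
  refine ⟨fun A L Ld hA hL _ hMP => main A L Ld hA hL hMP, ?_⟩
  intro A₁ L₁ Ld₁ A₂ L₂ Ld₂ hA₁ hL₁ _ hMP₁ hA₂ hL₂ _ hMP₂ hR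
  have hd : Ld₁ = Ld₂ := by
    rw [main A₁ L₁ Ld₁ hA₁ hL₁ hMP₁, main A₂ L₂ Ld₂ hA₂ hL₂ hMP₂, hR]
  have hLeq : L₁ = L₂ :=
    mp_unique (mp_flip hMP₁) (by rw [hd]; exact mp_flip hMP₂)
  have hlap : lap A₁ = lap A₂ := by rw [← hL₁, ← hL₂, hLeq]
  funext i j
  rcases eq_or_ne i j with rfl | hij
  · rw [hA₁.2.2 i, hA₂.2.2 i]
  · have h := congrFun (congrFun hlap i) j
    simp only [lap, Matrix.sub_apply, Matrix.diagonal_apply_ne _ hij,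
      zero_sub, neg_inj] at h
    exact h
end

section
/- For a connected graph G with Laplacian eigendecomposition {(λ_k, φ_k)}, the RP-1 distance between G and the graph G + Δ_{i₀j₀} obtained by perturbing edge [i₀,j₀] by Δ is d_{rp(1)}(G, G+Δ_{i₀j₀}) = 2n|Δ| [Σ_{k=2}^n (φ_k(i₀) − φ_k(j₀))²/λ_k²] / [1 + Δ Σ_{k=2}^n (φ_k(i₀) − φ_k(j₀))²/λ_k]. -/
open Matrix Finset

set_option maxHeartbeats 1000000

lemma mp_unique_s7 {n : ℕ} (L X Y : Matrix (Fin n) (Fin n) ℝ)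
    (hX : IsMoorePenrose L X) (hY : IsMoorePenrose L Y) : X = Y := by
  obtain ⟨hx1, hx2, hx3, hx4⟩ := hX
  obtain ⟨hy1, hy2, hy3, hy4⟩ := hY
  have h1 : L * X = L * Y := by
    calc L * X = (L * X)ᵀ := hx3.symm
      _ = Xᵀ * Lᵀ := by rw [Matrix.transpose_mul]
      _ = Xᵀ * (L * Y * L)ᵀ := by rw [hy1]
      _ = Xᵀ * (Lᵀ * (L * Y)ᵀ) := by rw [Matrix.transpose_mul]
      _ = (Xᵀ * Lᵀ) * (L * Y)ᵀ := by rw [Matrix.mul_assoc]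
      _ = (L * X)ᵀ * (L * Y) := by rw [← Matrix.transpose_mul, hy3]
      _ = (L * X) * (L * Y) := by rw [hx3]
      _ = (L * X * L) * Y := by noncomm_ring
      _ = L * Y := by rw [hx1]
  have h2 : X * L = Y * L := by
    calc X * L = (X * L)ᵀ := hx4.symm
      _ = Lᵀ * Xᵀ := by rw [Matrix.transpose_mul]
      _ = (L * (Y * L))ᵀ * Xᵀ := by rw [← Matrix.mul_assoc, hy1]
      _ = ((Y * L)ᵀ * Lᵀ) * Xᵀ := by rw [Matrix.transpose_mul]
      _ = (Y * L)ᵀ * (Lᵀ * Xᵀ) := by rw [Matrix.mul_assoc]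
      _ = (Y * L) * (X * L)ᵀ := by rw [hy4, ← Matrix.transpose_mul]
      _ = (Y * L) * (X * L) := by rw [hx4]
      _ = Y * (L * X * L) := by noncomm_ring
      _ = Y * L := by rw [hx1]
  calc X = X * L * X := hx2.symm
    _ = Y * L * X := by rw [h2]
    _ = Y * (L * X) := by rw [Matrix.mul_assoc]
    _ = Y * (L * Y) := by rw [h1]
    _ = Y * L * Y := by rw [Matrix.mul_assoc]
    _ = Y := hy2

lemma mul_vecMulVec {n : ℕ} (A : Matrix (Fin n) (Fin n) ℝ) (u v : Fin n → ℝ) :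
    A * vecMulVec u v = vecMulVec (A.mulVec u) v := by
  ext i j
  simp [Matrix.mul_apply, Matrix.vecMulVec_apply, Matrix.mulVec, dotProduct,
    Finset.sum_mul, mul_assoc]

lemma vecMulVec_mul {n : ℕ} (u v : Fin n → ℝ) (A : Matrix (Fin n) (Fin n) ℝ) :
    vecMulVec u v * A = vecMulVec u (Aᵀ.mulVec v) := by
  ext i j
  simp only [Matrix.mul_apply, Matrix.vecMulVec_apply, Matrix.mulVec, dotProduct,
    Finset.mul_sum]
  apply Finset.sum_congr rfl
  intro k _
  rw [Matrix.transpose_apply]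
  ring

lemma vecMulVec_mul_vecMulVec {n : ℕ} (u v x y : Fin n → ℝ) :
    vecMulVec u v * vecMulVec x y = (v ⬝ᵥ x) • vecMulVec u y := by
  ext i j
  simp only [Matrix.mul_apply, Matrix.vecMulVec_apply, Matrix.smul_apply,
    dotProduct, smul_eq_mul, Finset.sum_mul, Finset.mul_sum]
  apply Finset.sum_congr rfl
  intro k _
  ring

/-- RP-1 distance under a single-edge perturbation, in terms of the Laplacian
eigendecomposition:
`d_rp1(G, G+Δ) = 2n|Δ| (∑_{k=2}^n (φ_k(i₀)-φ_k(j₀))²/λ_k²)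
                 / (1 + Δ ∑_{k=2}^n (φ_k(i₀)-φ_k(j₀))²/λ_k)`. -/
theorem rp1_single_edge_modification (n : ℕ) (hn : 0 < n)
    (A L Ld : Matrix (Fin n) (Fin n) ℝ)
    (hA : IsAdjMat A) (hL : L = lap A) (hconn : IsConnectedLap L)
    (hMP : IsMoorePenrose L Ld)
    (lam : Fin n → ℝ) (φ : Fin n → Fin n → ℝ)
    (horth : ∀ k l, (φ k) ⬝ᵥ (φ l) = if k = l then (1 : ℝ) else 0)
    (heig : ∀ k, L.mulVec (φ k) = lam k • φ k)
    (hlam0 : lam ⟨0, hn⟩ = 0) (hmono : Monotone lam)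
    (hposlam : ∀ k, k ≠ (⟨0, hn⟩ : Fin n) → 0 < lam k)
    (hphi1 : φ ⟨0, hn⟩ = fun _ => 1 / Real.sqrt n)
    (i₀ j₀ : Fin n) (hne : i₀ ≠ j₀) (Δ : ℝ)
    (L₂ Ld₂ : Matrix (Fin n) (Fin n) ℝ)
    (hL₂ : L₂ = L + Δ • Matrix.vecMulVec (Pi.single i₀ 1 - Pi.single j₀ 1)
        (Pi.single i₀ 1 - Pi.single j₀ 1))
    (hconn₂ : IsConnectedLap L₂) (hMP₂ : IsMoorePenrose L₂ Ld₂)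
    (hpos : 0 < 1 + Δ * effR Ld i₀ j₀) :
    ∑ i, ∑ j, |effR Ld i j - effR Ld₂ i j|
      = 2 * n * |Δ|
          * (∑ k ∈ Finset.univ.erase (⟨0, hn⟩ : Fin n),
              (1 / (lam k) ^ 2) * (φ k i₀ - φ k j₀) ^ 2)
          / (1 + Δ * ∑ k ∈ Finset.univ.erase (⟨0, hn⟩ : Fin n),
              (1 / lam k) * (φ k i₀ - φ k j₀) ^ 2) := by
  classical
  set e0 : Fin n := ⟨0, hn⟩ with he0
  set Φ : Matrix (Fin n) (Fin n) ℝ := Matrix.of (fun i k => φ k i) with hΦ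
  have hΦtΦ : Φᵀ * Φ = 1 := by
    ext k l
    simpa [Matrix.mul_apply, Matrix.one_apply, hΦ, dotProduct] using horth k l
  have hΦΦt : Φ * Φᵀ = 1 := mul_eq_one_comm.mp hΦtΦ
  have hLΦ : L * Φ = Φ * Matrix.diagonal lam := by
    ext i k
    have h := congrFun (heig k) i
    simp only [Matrix.mulVec, dotProduct, Pi.smul_apply, smul_eq_mul] at h
    rw [Matrix.mul_diagonal, Matrix.mul_apply]
    simp only [hΦ, Matrix.of_apply]
    rw [h]; ring
  set F : (Fin n → ℝ) → Matrix (Fin n) (Fin n) ℝ :=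
    fun f => Φ * Matrix.diagonal f * Φᵀ with hF
  have hFmul : ∀ f g : Fin n → ℝ, F f * F g = F (fun k => f k * g k) := by
    intro f g
    simp only [hF]
    calc Φ * Matrix.diagonal f * Φᵀ * (Φ * Matrix.diagonal g * Φᵀ)
        = Φ * Matrix.diagonal f * ((Φᵀ * Φ) * (Matrix.diagonal g * Φᵀ)) := by noncomm_ring
      _ = Φ * Matrix.diagonal f * (Matrix.diagonal g * Φᵀ) := by
          rw [hΦtΦ, Matrix.one_mul]
      _ = Φ * (Matrix.diagonal f * Matrix.diagonal g) * Φᵀ := by noncomm_ring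
      _ = Φ * Matrix.diagonal (fun k => f k * g k) * Φᵀ := by
          rw [Matrix.diagonal_mul_diagonal]
  have hFt : ∀ f : Fin n → ℝ, (F f)ᵀ = F f := by
    intro f
    simp [hF, Matrix.transpose_mul, Matrix.diagonal_transpose, Matrix.mul_assoc]
  have hFapply : ∀ (f : Fin n → ℝ) i j, F f i j = ∑ k, f k * (φ k i * φ k j) := by
    intro f i j
    show (Φ * Matrix.diagonal f * Φᵀ) i j = _
    rw [Matrix.mul_apply]
    refine Finset.sum_congr rfl fun k _ => ?_
    rw [Matrix.mul_diagonal, Matrix.transpose_apply]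
    simp only [hΦ, Matrix.of_apply]
    ring
  have hFext : ∀ (a b : Fin n → ℝ), (∀ k, a k = b k) → F a = F b :=
    fun a b h => congrArg F (funext h)
  have hLF : L = F lam := by
    calc L = L * (Φ * Φᵀ) := by rw [hΦΦt, Matrix.mul_one]
      _ = (L * Φ) * Φᵀ := by rw [Matrix.mul_assoc]
      _ = F lam := by rw [hLΦ]
  set g : Fin n → ℝ := fun k => if k = e0 then 0 else (lam k)⁻¹ with hg
  set p : Fin n → ℝ := fun k => if k = e0 then 0 else 1 with hp
  have hlg : ∀ k, lam k * g k = p k := by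
    intro k
    by_cases h : k = e0
    · simp [hg, hp, h, hlam0]
    · simp only [hg, hp, if_neg h]
      exact mul_inv_cancel₀ (hposlam k h).ne'
  have hgl : ∀ k, g k * lam k = p k := fun k => by rw [mul_comm]; exact hlg k
  have hpl : ∀ k, p k * lam k = lam k := by
    intro k
    by_cases h : k = e0
    · simp [hp, h, hlam0]
    · simp [hp, if_neg h]
  have hpg : ∀ k, p k * g k = g k := by
    intro k
    by_cases h : k = e0 <;> simp [hp, hg, h]
  set S := F g with hS
  have hMP_S : IsMoorePenrose L S := by
    rw [hLF, hS]
    refine ⟨?_, ?_, ?_, ?_⟩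
    · rw [hFmul, hFmul]
      exact hFext _ _ fun k => by simp only [hlg, hpl]
    · rw [hFmul, hFmul]
      exact hFext _ _ fun k => by simp only [hgl, hpg]
    · rw [hFmul]; exact hFt _
    · rw [hFmul]; exact hFt _
  have hLdS : Ld = S := mp_unique_s7 L Ld S hMP hMP_S
  have hSymmS : Sᵀ = S := by rw [hS]; exact hFt g
  set u : Fin n → ℝ := Pi.single i₀ 1 - Pi.single j₀ 1 with hu
  set U := Matrix.vecMulVec u u with hU
  set d : Fin n → ℝ := fun k => φ k i₀ - φ k j₀ with hd
  set w : Fin n → ℝ := S.mulVec u with hw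
  set r : ℝ := u ⬝ᵥ w with hr
  have hwi : ∀ i, w i = S i i₀ - S i j₀ := by
    intro i
    simp [hw, hu, Matrix.mulVec, dotProduct, Pi.single_apply, mul_sub,
      Finset.sum_sub_distrib, mul_ite, mul_one, mul_zero, Finset.sum_ite_eq']
  have hw_as_sum : ∀ i, w i = ∑ k, (g k * d k) * φ k i := by
    intro i
    rw [hwi i, hS, hFapply, hFapply, ← Finset.sum_sub_distrib]
    refine Finset.sum_congr rfl fun k _ => ?_
    simp only [hd]
    ring
  have hcol : ∀ k, k ≠ e0 → ∑ i, φ k i = 0 := by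
    intro k hk
    have h := horth k e0
    rw [if_neg hk, hphi1] at h
    simp only [dotProduct] at h
    rw [← Finset.sum_mul] at h
    rcases mul_eq_zero.mp h with h' | h'
    · exact h'
    · exfalso
      have hs : (0:ℝ) < Real.sqrt n := Real.sqrt_pos.mpr (by exact_mod_cast hn)
      rw [div_eq_zero_iff] at h'
      rcases h' with h' | h'
      · exact one_ne_zero h'
      · exact hs.ne' h'
  have hsum_w : ∑ i, w i = 0 := by
    rw [Finset.sum_congr rfl (fun i _ => hw_as_sum i), Finset.sum_comm]
    apply Finset.sum_eq_zero
    intro k _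
    by_cases hk : k = e0
    · simp [hk, hg]
    · rw [← Finset.mul_sum, hcol k hk, mul_zero]
  have hdot : ∀ a b : Fin n → ℝ,
      (∑ i, (∑ k, a k * φ k i) * (∑ k, b k * φ k i)) = ∑ k, a k * b k := by
    intro a b
    have h1 : ∀ i, (∑ k, a k * φ k i) * (∑ l, b l * φ l i)
        = ∑ k, ∑ l, (a k * b l) * (φ k i * φ l i) := by
      intro i
      rw [Finset.sum_mul_sum]
      exact Finset.sum_congr rfl fun k _ => Finset.sum_congr rfl fun l _ => by ring
    calc (∑ i, (∑ k, a k * φ k i) * (∑ k, b k * φ k i))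
        = ∑ i, ∑ k, ∑ l, (a k * b l) * (φ k i * φ l i) :=
          Finset.sum_congr rfl fun i _ => h1 i
      _ = ∑ k, ∑ i, ∑ l, (a k * b l) * (φ k i * φ l i) := Finset.sum_comm
      _ = ∑ k, ∑ l, ∑ i, (a k * b l) * (φ k i * φ l i) :=
          Finset.sum_congr rfl fun k _ => Finset.sum_comm
      _ = ∑ k, ∑ l, (a k * b l) * (φ k ⬝ᵥ φ l) := by
          refine Finset.sum_congr rfl fun k _ => Finset.sum_congr rfl fun l _ => ?_
          rw [← Finset.mul_sum]
          rfl
      _ = ∑ k, a k * b k := by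
          refine Finset.sum_congr rfl fun k _ => ?_
          simp [horth, mul_ite, Finset.sum_ite_eq]
  have hW2 : ∑ i, w i ^ 2 = ∑ k, (g k * d k) ^ 2 := by
    calc ∑ i, w i ^ 2
        = ∑ i, (∑ k, (g k * d k) * φ k i) * (∑ k, (g k * d k) * φ k i) := by
          refine Finset.sum_congr rfl fun i _ => ?_
          rw [hw_as_sum i]; ring
      _ = ∑ k, (g k * d k) * (g k * d k) := hdot _ _
      _ = ∑ k, (g k * d k) ^ 2 := Finset.sum_congr rfl fun k _ => by ring
  have hru : r = w i₀ - w j₀ := by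
    simp [hr, hu, dotProduct, Pi.single_apply, sub_mul, Finset.sum_sub_distrib,
      ite_mul, one_mul, zero_mul, Finset.sum_ite_eq']
  have hr_val : r = ∑ k, g k * d k ^ 2 := by
    rw [hru, hw_as_sum i₀, hw_as_sum j₀, ← Finset.sum_sub_distrib]
    refine Finset.sum_congr rfl fun k _ => ?_
    simp only [hd]
    ring
  have heffS : effR S i₀ j₀ = r := by
    rw [hr_val]
    simp only [effR]
    rw [hS, hFapply, hFapply, hFapply, Finset.mul_sum, ← Finset.sum_add_distrib,
      ← Finset.sum_sub_distrib]
    refine Finset.sum_congr rfl fun k _ => ?_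
    simp only [hd]
    ring
  have hrpos : 0 < 1 + Δ * r := by
    rw [hLdS, heffS] at hpos
    exact hpos
  set c : ℝ := Δ / (1 + Δ * r) with hc
  have hcΔ : Δ - c - c * Δ * r = 0 := by
    rw [hc]
    field_simp
    ring
  set W := Matrix.vecMulVec w w with hW
  set M := S - c • W with hM
  have hLS : L * S = F p := by
    rw [hLF, hS, hFmul]
    exact hFext _ _ hlg
  have hPL : F p * L = L := by
    conv_lhs => rw [hLF]
    rw [hFmul, hFext _ _ hpl, ← hLF]
  have hPS : F p * S = S := by
    rw [hS, hFmul, hFext _ _ hpg]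
  have hFone : F (fun _ => (1:ℝ)) = 1 := by
    rw [hF]
    simp only
    rw [Matrix.diagonal_one, Matrix.mul_one, hΦΦt]
  have hq : F (fun k => if k = e0 then (1:ℝ) else 0) = Matrix.of fun _ _ => (n:ℝ)⁻¹ := by
    ext i j
    rw [hFapply]
    have hs : Real.sqrt n * Real.sqrt n = (n:ℝ) := Real.mul_self_sqrt (by positivity)
    simp only [ite_mul, one_mul, zero_mul, Finset.sum_ite_eq', Finset.mem_univ, if_true]
    rw [hphi1]
    simp only [Matrix.of_apply]
    rw [div_mul_div_comm, one_mul, hs, one_div]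
  have hFsub : F (fun k => (1:ℝ) - (if k = e0 then (1:ℝ) else 0)) =
      F (fun _ => (1:ℝ)) - F (fun k => if k = e0 then (1:ℝ) else 0) := by
    simp only [hF]
    have hdiag : Matrix.diagonal (fun k => (1:ℝ) - (if k = e0 then (1:ℝ) else 0))
        = Matrix.diagonal (fun _ => (1:ℝ)) - Matrix.diagonal (fun k => if k = e0 then (1:ℝ) else 0) := by
      ext i j
      by_cases h : i = j <;> simp [Matrix.diagonal, h]
    rw [hdiag, Matrix.mul_sub, Matrix.sub_mul]
  have hpq : p = fun k => (1:ℝ) - (if k = e0 then (1:ℝ) else 0) := by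
    funext k
    by_cases h : k = e0 <;> simp [hp, h]
  have hFp1 : F p = 1 - Matrix.of fun _ _ => (n:ℝ)⁻¹ := by
    rw [hpq, hFsub, hFone, hq]
  have hsumu : ∑ j, u j = 0 := by
    simp [hu, Pi.single_apply, Finset.sum_sub_distrib, Finset.sum_ite_eq']
  have hJu : (Matrix.of (fun _ _ => (n:ℝ)⁻¹) : Matrix (Fin n) (Fin n) ℝ).mulVec u = 0 := by
    funext i
    simp only [Matrix.mulVec, dotProduct, Matrix.of_apply, Pi.zero_apply]
    rw [← Finset.mul_sum, hsumu, mul_zero]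
  have hPu : (F p).mulVec u = u := by
    rw [hFp1, Matrix.sub_mulVec, hJu, Matrix.one_mulVec, sub_zero]
  have hLw : L.mulVec w = u := by
    rw [hw, Matrix.mulVec_mulVec, hLS, hPu]
  have hPw : (F p).mulVec w = w := by
    rw [hw, Matrix.mulVec_mulVec, hPS]
  have hSu_w : Sᵀ.mulVec u = w := by
    rw [hSymmS, ← hw]
  have e1 : L * W = Matrix.vecMulVec u w := by
    rw [hW, mul_vecMulVec, hLw]
  have e2 : U * S = Matrix.vecMulVec u w := by
    rw [hU, vecMulVec_mul, hSu_w]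
  have e3 : U * W = r • Matrix.vecMulVec u w := by
    rw [hU, hW, vecMulVec_mul_vecMulVec, ← hr]
  have hL2M : L₂ * M = F p := by
    rw [hL₂, hM]
    calc (L + Δ • U) * (S - c • W)
        = L * S - c • (L * W) + (Δ • (U * S) - (c * Δ) • (U * W)) := by
          rw [Matrix.add_mul, Matrix.mul_sub, Matrix.mul_sub, Matrix.smul_mul,
            Matrix.mul_smul, Matrix.mul_smul, Matrix.smul_mul, smul_smul]
      _ = F p + (Δ - c - c * Δ * r) • Matrix.vecMulVec u w := by
          rw [hLS, e1, e2, e3, smul_smul]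
          rw [sub_smul, sub_smul]
          abel
      _ = F p := by rw [hcΔ, zero_smul, add_zero]
  have hWt : Wᵀ = W := by
    ext i j
    simp [hW, Matrix.vecMulVec_apply, mul_comm]
  have hMt : Mᵀ = M := by
    rw [hM, Matrix.transpose_sub, Matrix.transpose_smul, hWt, hSymmS]
  have hUt : Uᵀ = U := by
    ext i j
    simp [hU, Matrix.vecMulVec_apply, mul_comm]
  have hLt : Lᵀ = L := by
    conv_lhs => rw [hLF]
    rw [hFt]
    exact hLF.symm
  have hL2t : L₂ᵀ = L₂ := by
    rw [hL₂, Matrix.transpose_add, Matrix.transpose_smul, hLt, hUt]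
  have hML2 : M * L₂ = F p := by
    calc M * L₂ = (L₂ᵀ * Mᵀ)ᵀ := by rw [← Matrix.transpose_mul, Matrix.transpose_transpose]
      _ = (L₂ * M)ᵀ := by rw [hL2t, hMt]
      _ = F p := by rw [hL2M]; exact hFt p
  have hFpU : F p * U = U := by
    rw [hU, mul_vecMulVec, hPu]
  have hFpW : F p * W = W := by
    rw [hW, mul_vecMulVec, hPw]
  have hMPM : IsMoorePenrose L₂ M := by
    refine ⟨?_, ?_, ?_, ?_⟩
    · rw [hL2M]
      conv_lhs => rw [hL₂]
      rw [Matrix.mul_add, hPL, Matrix.mul_smul, hFpU]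
      exact hL₂.symm
    · rw [hML2]
      conv_lhs => rw [hM]
      rw [Matrix.mul_sub, hPS, Matrix.mul_smul, hFpW]
    · rw [hL2M]; exact hFt p
    · rw [hML2]; exact hFt p
  have hLd2 : Ld₂ = M := mp_unique_s7 L₂ Ld₂ M hMP₂ hMPM
  have heffdiff : ∀ i j, effR Ld i j - effR Ld₂ i j = c * (w i - w j) ^ 2 := by
    intro i j
    rw [hLdS, hLd2]
    simp only [effR, hM, Matrix.sub_apply, Matrix.smul_apply, hW, Matrix.vecMulVec_apply,
      smul_eq_mul]
    ring
  have hsq : ∑ i, ∑ j, (w i - w j) ^ 2 = 2 * n * ∑ k, w k ^ 2 := by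
    have hrow : ∀ i, ∑ j, (w i - w j) ^ 2
        = n * w i ^ 2 - 2 * w i * (∑ j, w j) + ∑ j, w j ^ 2 := by
      intro i
      have : ∀ j, (w i - w j) ^ 2 = w i ^ 2 - 2 * w i * w j + w j ^ 2 := fun j => by ring
      rw [Finset.sum_congr rfl fun j _ => this j]
      rw [Finset.sum_add_distrib, Finset.sum_sub_distrib, Finset.sum_const,
        Finset.card_univ, Fintype.card_fin, ← Finset.mul_sum]
      push_cast
      ring
    rw [Finset.sum_congr rfl fun i _ => hrow i, hsum_w]
    rw [Finset.sum_add_distrib, Finset.sum_sub_distrib, Finset.sum_const,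
      Finset.card_univ, Fintype.card_fin]
    have h1 : ∑ i, (n : ℝ) * w i ^ 2 = n * ∑ i, w i ^ 2 := by rw [Finset.mul_sum]
    have h2 : ∑ i, 2 * w i * (0:ℝ) = 0 := by simp
    rw [h1, h2, sub_zero, nsmul_eq_mul]
    ring
  have hsum2 : ∑ k, (g k * d k) ^ 2
      = ∑ k ∈ Finset.univ.erase e0, (1 / (lam k) ^ 2) * (φ k i₀ - φ k j₀) ^ 2 := by
    rw [← Finset.sum_erase (f := fun k => (g k * d k) ^ 2) (a := e0) Finset.univ
      (by simp [hg])]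
    refine Finset.sum_congr rfl fun k hk => ?_
    have hk' : k ≠ e0 := Finset.ne_of_mem_erase hk
    simp only [hg, hd, if_neg hk']
    rw [mul_pow, inv_pow, ← one_div]
  have hsum1 : r = ∑ k ∈ Finset.univ.erase e0, (1 / lam k) * (φ k i₀ - φ k j₀) ^ 2 := by
    rw [hr_val, ← Finset.sum_erase (f := fun k => g k * d k ^ 2) (a := e0) Finset.univ
      (by simp [hg])]
    refine Finset.sum_congr rfl fun k hk => ?_
    have hk' : k ≠ e0 := Finset.ne_of_mem_erase hk
    simp only [hg, hd, if_neg hk']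
    rw [one_div]
  calc ∑ i, ∑ j, |effR Ld i j - effR Ld₂ i j|
      = ∑ i, ∑ j, |c| * (w i - w j) ^ 2 := by
        refine Finset.sum_congr rfl fun i _ => Finset.sum_congr rfl fun j _ => ?_
        rw [heffdiff i j, abs_mul, abs_of_nonneg (sq_nonneg (w i - w j))]
    _ = |c| * ∑ i, ∑ j, (w i - w j) ^ 2 := by
        rw [Finset.mul_sum]
        exact Finset.sum_congr rfl fun i _ => by rw [Finset.mul_sum]
    _ = |c| * (2 * n * ∑ k, w k ^ 2) := by rw [hsq]
    _ = 2 * n * |Δ|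
          * (∑ k ∈ Finset.univ.erase e0, (1 / (lam k) ^ 2) * (φ k i₀ - φ k j₀) ^ 2)
          / (1 + Δ * ∑ k ∈ Finset.univ.erase e0, (1 / lam k) * (φ k i₀ - φ k j₀) ^ 2) := by
        rw [hW2, hsum2, ← hsum1, hc, abs_div, abs_of_pos hrpos]
        field_simp
end

section
/- Let Z⁽¹⁾, Z⁽²⁾ be s×n real matrices, d = diag((Z⁽¹⁾)ᵀZ⁽¹⁾ − (Z⁽²⁾)ᵀZ⁽²⁾) ∈ ℝⁿ, and R̃⁽ˡ⁾ = diag((Z⁽ˡ⁾)ᵀZ⁽ˡ⁾)1ᵀ + 1·diag((Z⁽ˡ⁾)ᵀZ⁽ˡ⁾)ᵀ − 2(Z⁽ˡ⁾)ᵀZ⁽ˡ⁾. Then ‖R̃⁽¹⁾ − R̃⁽²⁾‖_F² = 2(1ᵀd)² + 2n‖d‖₂² − 8·1ᵀ(Z⁽¹⁾)ᵀZ⁽¹⁾d + 8·1ᵀ(Z⁽²⁾)ᵀZ⁽²⁾d + 4‖Z⁽¹⁾(Z⁽¹⁾)ᵀ‖_F² + 4‖Z⁽²⁾(Z⁽²⁾)ᵀ‖_F²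 − 8‖Z⁽²⁾(Z⁽¹⁾)ᵀ‖_F². -/
open Matrix Finset

lemma tr_aux {n : ℕ} (M N : Matrix (Fin n) (Fin n) ℝ) :
    Matrix.trace (M * Nᵀ) = ∑ i, ∑ j, M i j * N i j := by
  simp [Matrix.trace, Matrix.mul_apply, Matrix.diag]

lemma cross_aux {s n : ℕ} (A B : Matrix (Fin s) (Fin n) ℝ) :
    ∑ i, ∑ j, (Aᵀ * A) i j * (Bᵀ * B) i j = ∑ i, ∑ j, ((B * Aᵀ) i j) ^ 2 := by
  have h1 : ∑ i, ∑ j, (Aᵀ * A) i j * (Bᵀ * B) i j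
      = Matrix.trace ((Aᵀ * A) * (Bᵀ * B)ᵀ) := (tr_aux _ _).symm
  have h2 : ∑ i, ∑ j, ((B * Aᵀ) i j) ^ 2
      = Matrix.trace ((B * Aᵀ) * (B * Aᵀ)ᵀ) := by
    rw [tr_aux]; simp [sq]
  rw [h1, h2]
  rw [Matrix.transpose_mul, Matrix.transpose_transpose, Matrix.transpose_mul,
    Matrix.transpose_transpose]
  rw [show (Aᵀ * A) * (Bᵀ * B) = (Aᵀ * A * Bᵀ) * B from by simp [Matrix.mul_assoc],
    Matrix.trace_mul_comm]
  congr 1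
  simp [Matrix.mul_assoc]

/-- Fast Frobenius identity: for `s×n` matrices `Z⁽¹⁾, Z⁽²⁾`, with
`d = diag((Z⁽¹⁾)ᵀZ⁽¹⁾ - (Z⁽²⁾)ᵀZ⁽²⁾)` and
`R̃⁽ˡ⁾ = diag((Z⁽ˡ⁾)ᵀZ⁽ˡ⁾)1ᵀ + 1 diag((Z⁽ˡ⁾)ᵀZ⁽ˡ⁾)ᵀ - 2(Z⁽ˡ⁾)ᵀZ⁽ˡ⁾`, one has
`‖R̃⁽¹⁾-R̃⁽²⁾‖_F² = 2(1ᵀd)² + 2n‖d‖₂² - 8·1ᵀ(Z⁽¹⁾)ᵀZ⁽¹⁾d + 8·1ᵀ(Z⁽²⁾)ᵀZ⁽²⁾d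
 + 4‖Z⁽¹⁾(Z⁽¹⁾)ᵀ‖_F² + 4‖Z⁽²⁾(Z⁽²⁾)ᵀ‖_F² - 8‖Z⁽²⁾(Z⁽¹⁾)ᵀ‖_F²`. -/
theorem fast_frobenius (s n : ℕ) (Z₁ Z₂ : Matrix (Fin s) (Fin n) ℝ) :
    let G₁ : Matrix (Fin n) (Fin n) ℝ := Z₁ᵀ * Z₁
    let G₂ : Matrix (Fin n) (Fin n) ℝ := Z₂ᵀ * Z₂
    let d : Fin n → ℝ := fun i => G₁ i i - G₂ i i
    let Rt₁ : Matrix (Fin n) (Fin n) ℝ := Matrix.of fun i j => G₁ i i + G₁ j j - 2 * G₁ i j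
    let Rt₂ : Matrix (Fin n) (Fin n) ℝ := Matrix.of fun i j => G₂ i i + G₂ j j - 2 * G₂ i j
    (∑ i, ∑ j, (Rt₁ i j - Rt₂ i j) ^ 2)
      = 2 * (∑ i, d i) ^ 2 + 2 * n * (∑ i, (d i) ^ 2)
        - 8 * ((fun _ => (1 : ℝ)) ⬝ᵥ G₁.mulVec d)
        + 8 * ((fun _ => (1 : ℝ)) ⬝ᵥ G₂.mulVec d)
        + 4 * (∑ i, ∑ j, ((Z₁ * Z₁ᵀ) i j) ^ 2)
        + 4 * (∑ i, ∑ j, ((Z₂ * Z₂ᵀ) i j) ^ 2)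
        - 8 * (∑ i, ∑ j, ((Z₂ * Z₁ᵀ) i j) ^ 2) := by
  intro G₁ G₂ d Rt₁ Rt₂
  have hsym₁ : ∀ i j, G₁ i j = G₁ j i := by
    intro i j; simp [G₁, Matrix.mul_apply, mul_comm]
  have hsym₂ : ∀ i j, G₂ i j = G₂ j i := by
    intro i j; simp [G₂, Matrix.mul_apply, mul_comm]
  have hdot₁ : ((fun _ => (1 : ℝ)) ⬝ᵥ G₁.mulVec d) = ∑ i, ∑ j, G₁ i j * d j := by
    simp [dotProduct, Matrix.mulVec]
  have hdot₂ : ((fun _ => (1 : ℝ)) ⬝ᵥ G₂.mulVec d) = ∑ i, ∑ j, G₂ i j * d j := by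
    simp [dotProduct, Matrix.mulVec]
  have hQ11 : ∑ i, ∑ j, ((Z₁ * Z₁ᵀ) i j) ^ 2 = ∑ i, ∑ j, G₁ i j * G₁ i j := by
    rw [← cross_aux Z₁ Z₁]
  have hQ22 : ∑ i, ∑ j, ((Z₂ * Z₂ᵀ) i j) ^ 2 = ∑ i, ∑ j, G₂ i j * G₂ i j := by
    rw [← cross_aux Z₂ Z₂]
  have hQ12 : ∑ i, ∑ j, ((Z₂ * Z₁ᵀ) i j) ^ 2 = ∑ i, ∑ j, G₁ i j * G₂ i j := by
    rw [← cross_aux Z₁ Z₂]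
  -- cross term symmetry
  have hcross₁ : ∑ i, d i * ∑ j, G₁ i j = ∑ i, ∑ j, G₁ i j * d j := by
    simp_rw [Finset.mul_sum]
    rw [Finset.sum_comm]
    exact Finset.sum_congr rfl fun j _ => Finset.sum_congr rfl fun i _ => by
      rw [hsym₁ i j]; ring
  have hcross₂ : ∑ i, d i * ∑ j, G₂ i j = ∑ i, ∑ j, G₂ i j * d j := by
    simp_rw [Finset.mul_sum]
    rw [Finset.sum_comm]
    exact Finset.sum_congr rfl fun j _ => Finset.sum_congr rfl fun i _ => by
      rw [hsym₂ i j]; ring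
  have hentry : ∀ i j, (Rt₁ i j - Rt₂ i j) ^ 2
      = (d i)^2 + (d j)^2 + 2*(d i * d j)
        - 4*(d i * G₁ i j) + 4*(d i * G₂ i j) - 4*(G₁ i j * d j) + 4*(G₂ i j * d j)
        + 4*(G₁ i j * G₁ i j) + 4*(G₂ i j * G₂ i j) - 8*(G₁ i j * G₂ i j) := by
    intro i j
    show (((G₁ i i + G₁ j j - 2 * G₁ i j) : ℝ) - (G₂ i i + G₂ j j - 2 * G₂ i j)) ^ 2 = _
    simp only [d]
    ring
  rw [Finset.sum_congr rfl fun i _ => Finset.sum_congr rfl fun j _ => hentry i j]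
  simp only [Finset.sum_add_distrib, Finset.sum_sub_distrib, ← Finset.mul_sum,
    ← Finset.sum_mul, Finset.sum_const, Finset.card_univ, Fintype.card_fin, nsmul_eq_mul]
  rw [hcross₁, hcross₂, hdot₁, hdot₂, hQ11, hQ22, hQ12]
  ring
end

section
/- For a connected graph with Laplacian eigenvalues 0 = λ₁ < λ₂ ≤ ... ≤ λ_n and orthonormal eigenvectors φ_k, and any 2 ≤ p ≤ n, the partial-sum bounds hold: 2/λ_n + Σ_{k=2}^p (1/λ_k − 1/λ_n)(φ_k(i)−φ_k(j))² ≤ Σ_{k=2}^n (1/λ_k)(φ_k(i)−φ_k(j))² ≤ 2/λ_p + Σ_{k=2}^p (1/λ_k − 1/λ_p)(φ_k(i)−φ_k(j))², and the analogous bounds with λ_k replaced by λ_k² throughout. -/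
open Matrix Finset

/-! The weights `c k = (φ k i - φ k j) ^ 2` of the nonzero modes are nonnegative and sum to `2`:
a square matrix with orthonormal rows has orthonormal columns, and the zero mode `φ 0` is
constant. Each bound compares a `c`-weighted sum of the decreasing quantities `1 / λ_k` (or
`1 / λ_k ^ 2`) with its truncation at `p`; the modes beyond `p` carry total weight
`2 - ∑_{k ≤ p} c k` and values between `1 / λ_n` and `1 / λ_p`. -/

section WeightedSums

variable {ι : Type*} [DecidableEq ι] {S P : Finset ι} {f c : ι → ℝ} {b : ℝ}

lemma sum_mul_eq_mul_sum_add_sum_add_sum_sdiff (hPS : P ⊆ S) :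
    ∑ k ∈ S, f k * c k
      = b * ∑ k ∈ S, c k + ∑ k ∈ P, (f k - b) * c k + ∑ k ∈ S \ P, (f k - b) * c k := by
  calc ∑ k ∈ S, f k * c k = ∑ k ∈ S, (b * c k + (f k - b) * c k) :=
        sum_congr rfl fun k _ => by ring
    _ = _ := by
      rw [sum_add_distrib, ← mul_sum, ← sum_sdiff hPS (f := fun k => (f k - b) * c k)]
      ring

lemma sum_mul_le_of_le_on_sdiff (hPS : P ⊆ S) (hc : ∀ k ∈ S, 0 ≤ c k)
    (hf : ∀ k ∈ S \ P, f k ≤ b) :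
    ∑ k ∈ S, f k * c k ≤ b * ∑ k ∈ S, c k + ∑ k ∈ P, (f k - b) * c k := by
  have hrest : ∑ k ∈ S \ P, (f k - b) * c k ≤ 0 := sum_nonpos fun k hk =>
    mul_nonpos_of_nonpos_of_nonneg (sub_nonpos.mpr (hf k hk)) (hc k (mem_sdiff.mp hk).1)
  linarith [sum_mul_eq_mul_sum_add_sum_add_sum_sdiff (f := f) (c := c) (b := b) hPS]

lemma le_sum_mul_of_le_on_sdiff (hPS : P ⊆ S) (hc : ∀ k ∈ S, 0 ≤ c k)
    (hf : ∀ k ∈ S \ P, b ≤ f k) :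
    b * ∑ k ∈ S, c k + ∑ k ∈ P, (f k - b) * c k ≤ ∑ k ∈ S, f k * c k := by
  have hrest : 0 ≤ ∑ k ∈ S \ P, (f k - b) * c k := sum_nonneg fun k hk =>
    mul_nonneg (sub_nonneg.mpr (hf k hk)) (hc k (mem_sdiff.mp hk).1)
  linarith [sum_mul_eq_mul_sum_add_sum_add_sum_sdiff (f := f) (c := c) (b := b) hPS]

end WeightedSums

lemma sum_mul_eq_ite_of_orthonormal_rows {ι : Type*} [Fintype ι] [DecidableEq ι]
    {φ : ι → ι → ℝ} (horth : ∀ k l, φ k ⬝ᵥ φ l = if k = l then (1 : ℝ) else 0) (a b : ι) :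
    ∑ k, φ k a * φ k b = if a = b then 1 else 0 := by
  have hrows : of φ * (of φ)ᵀ = 1 := by
    ext k l
    simpa [mul_apply, one_apply, dotProduct] using horth k l
  simpa [mul_apply, one_apply] using congrArg (· a b) (mul_eq_one_comm.mp hrows)

lemma sum_sq_sub_eq_two_of_orthonormal_rows {ι : Type*} [Fintype ι] [DecidableEq ι]
    {φ : ι → ι → ℝ} (horth : ∀ k l, φ k ⬝ᵥ φ l = if k = l then (1 : ℝ) else 0)
    {i j : ι} (hij : i ≠ j) :
    ∑ k, (φ k i - φ k j) ^ 2 = 2 := by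
  have hcol := sum_mul_eq_ite_of_orthonormal_rows horth
  calc ∑ k, (φ k i - φ k j) ^ 2
        = ∑ k, φ k i * φ k i - 2 * ∑ k, φ k i * φ k j + ∑ k, φ k j * φ k j := by
          rw [mul_sum, ← sum_sub_distrib, ← sum_add_distrib]
          exact sum_congr rfl fun k _ => by ring
    _ = 2 := by rw [hcol, hcol, hcol]; norm_num [hij]

lemma MonotoneOn.antitoneOn_one_div_pow {ι : Type*} [Preorder ι] {lam : ι → ℝ} {s : Set ι}
    (hmono : MonotoneOn lam s) (hpos : ∀ k ∈ s, 0 < lam k) (m : ℕ) :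
    AntitoneOn (fun k => 1 / lam k ^ m) s := fun a ha _ hb hab =>
  one_div_le_one_div_of_le (pow_pos (hpos a ha) m)
    (pow_le_pow_left₀ (hpos a ha).le (hmono ha hb hab) m)

lemma truncated_sum_bounds_of_antitoneOn {ι : Type*} [Fintype ι] [LinearOrder ι]
    {z p top : ι} (hzp : z < p) (htop : IsTop top) {f c : ι → ℝ}
    (hf : AntitoneOn f {k | k ≠ z}) (hc : ∀ k, 0 ≤ c k) :
    let S := univ.erase z
    let P := univ.filter fun k => k ≠ z ∧ k ≤ p
    (f top * ∑ k ∈ S, c k + ∑ k ∈ P, (f k - f top) * c k ≤ ∑ k ∈ S, f k * c k) ∧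
    (∑ k ∈ S, f k * c k ≤ f p * ∑ k ∈ S, c k + ∑ k ∈ P, (f k - f p) * c k) := by
  intro S P
  have hPS : P ⊆ S := fun k hk => mem_erase.mpr ⟨(mem_filter.mp hk).2.1, mem_univ k⟩
  have hsdiff : ∀ k ∈ S \ P, k ≠ z ∧ p < k := fun k hk => by
    simp only [S, P, mem_sdiff, mem_erase, mem_filter, mem_univ, true_and, not_and,
      not_le] at hk
    exact ⟨hk.1.1, hk.2 hk.1.1⟩
  have hpz : p ≠ z := hzp.ne'
  have htopz : top ≠ z := (hzp.trans_le (htop p)).ne'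
  refine ⟨le_sum_mul_of_le_on_sdiff hPS (fun k _ => hc k) fun k hk => ?_,
    sum_mul_le_of_le_on_sdiff hPS (fun k _ => hc k) fun k hk => ?_⟩
  · exact hf (hsdiff k hk).1 htopz (htop k)
  · exact hf hpz (hsdiff k hk).1 (hsdiff k hk).2.le

theorem partial_sum_bounds_general (n : ℕ) (hn : 0 < n)
    (lam : Fin n → ℝ) (φ : Fin n → Fin n → ℝ)
    (horth : ∀ k l, (φ k) ⬝ᵥ (φ l) = if k = l then (1 : ℝ) else 0)
    (hmono : Monotone lam)
    (hpos : ∀ k, k ≠ (⟨0, hn⟩ : Fin n) → 0 < lam k)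
    (hphi1 : φ ⟨0, hn⟩ = fun _ => 1 / Real.sqrt n)
    (hi : Fin n) (hhi : hi.val = n - 1)
    (p : Fin n) (hp : (⟨0, hn⟩ : Fin n) < p)
    (i j : Fin n) (hij : i ≠ j) :
    (2 / lam hi
        + ∑ k ∈ Finset.univ.filter (fun k => k ≠ (⟨0, hn⟩ : Fin n) ∧ k ≤ p),
            (1 / lam k - 1 / lam hi) * (φ k i - φ k j) ^ 2
      ≤ ∑ k ∈ Finset.univ.erase (⟨0, hn⟩ : Fin n), (1 / lam k) * (φ k i - φ k j) ^ 2)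
    ∧ (∑ k ∈ Finset.univ.erase (⟨0, hn⟩ : Fin n), (1 / lam k) * (φ k i - φ k j) ^ 2
      ≤ 2 / lam p
        + ∑ k ∈ Finset.univ.filter (fun k => k ≠ (⟨0, hn⟩ : Fin n) ∧ k ≤ p),
            (1 / lam k - 1 / lam p) * (φ k i - φ k j) ^ 2)
    ∧ (2 / (lam hi) ^ 2
        + ∑ k ∈ Finset.univ.filter (fun k => k ≠ (⟨0, hn⟩ : Fin n) ∧ k ≤ p),
            (1 / (lam k) ^ 2 - 1 / (lam hi) ^ 2) * (φ k i - φ k j) ^ 2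
      ≤ ∑ k ∈ Finset.univ.erase (⟨0, hn⟩ : Fin n), (1 / (lam k) ^ 2) * (φ k i - φ k j) ^ 2)
    ∧ (∑ k ∈ Finset.univ.erase (⟨0, hn⟩ : Fin n), (1 / (lam k) ^ 2) * (φ k i - φ k j) ^ 2
      ≤ 2 / (lam p) ^ 2
        + ∑ k ∈ Finset.univ.filter (fun k => k ≠ (⟨0, hn⟩ : Fin n) ∧ k ≤ p),
            (1 / (lam k) ^ 2 - 1 / (lam p) ^ 2) * (φ k i - φ k j) ^ 2) := by
  set z : Fin n := ⟨0, hn⟩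
  have hweights : ∑ k ∈ univ.erase z, (φ k i - φ k j) ^ 2 = 2 := by
    rw [sum_erase_eq_sub (mem_univ z), sum_sq_sub_eq_two_of_orthonormal_rows horth hij, hphi1]
    simp
  have htop : IsTop hi := fun k => Fin.le_def.mpr (by omega)
  have hanti := (hmono.monotoneOn {k | k ≠ z}).antitoneOn_one_div_pow hpos
  obtain ⟨h1, h2⟩ := truncated_sum_bounds_of_antitoneOn hp htop (hanti 1)
    fun k => sq_nonneg (φ k i - φ k j)
  obtain ⟨h3, h4⟩ := truncated_sum_bounds_of_antitoneOn hp htop (hanti 2)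
    fun k => sq_nonneg (φ k i - φ k j)
  simp only [pow_one, hweights, mul_comm _ (2 : ℝ), mul_one_div] at h1 h2 h3 h4
  exact ⟨h1, h2, h3, h4⟩

/-- Low-rank partial-sum bounds: for a connected Laplacian with eigenvalues
`0 = λ₁ < λ₂ ≤ … ≤ λ_n`, orthonormal eigenvectors `φ_k`, any truncation index `p ≥ 2`
and distinct vertices `i ≠ j`,
`2/λ_n + ∑_{k=2}^p (1/λ_k - 1/λ_n)(φ_k(i)-φ_k(j))²
  ≤ ∑_{k=2}^n (1/λ_k)(φ_k(i)-φ_k(j))²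
  ≤ 2/λ_p + ∑_{k=2}^p (1/λ_k - 1/λ_p)(φ_k(i)-φ_k(j))²`,
and the analogous bounds with `λ_k` replaced by `λ_k²`. -/
theorem partial_sum_bounds (n : ℕ) (hn : 0 < n)
    (A L : Matrix (Fin n) (Fin n) ℝ)
    (hA : IsAdjMat A) (hL : L = lap A) (hconn : IsConnectedLap L)
    (lam : Fin n → ℝ) (φ : Fin n → Fin n → ℝ)
    (horth : ∀ k l, (φ k) ⬝ᵥ (φ l) = if k = l then (1 : ℝ) else 0)
    (heig : ∀ k, L.mulVec (φ k) = lam k • φ k)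
    (hlam0 : lam ⟨0, hn⟩ = 0) (hmono : Monotone lam)
    (hpos : ∀ k, k ≠ (⟨0, hn⟩ : Fin n) → 0 < lam k)
    (hphi1 : φ ⟨0, hn⟩ = fun _ => 1 / Real.sqrt n)
    (hi : Fin n) (hhi : hi.val = n - 1)
    (p : Fin n) (hp : (⟨0, hn⟩ : Fin n) < p)
    (i j : Fin n) (hij : i ≠ j) :
    (2 / lam hi
        + ∑ k ∈ Finset.univ.filter (fun k => k ≠ (⟨0, hn⟩ : Fin n) ∧ k ≤ p),
            (1 / lam k - 1 / lam hi) * (φ k i - φ k j) ^ 2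
      ≤ ∑ k ∈ Finset.univ.erase (⟨0, hn⟩ : Fin n), (1 / lam k) * (φ k i - φ k j) ^ 2)
    ∧ (∑ k ∈ Finset.univ.erase (⟨0, hn⟩ : Fin n), (1 / lam k) * (φ k i - φ k j) ^ 2
      ≤ 2 / lam p
        + ∑ k ∈ Finset.univ.filter (fun k => k ≠ (⟨0, hn⟩ : Fin n) ∧ k ≤ p),
            (1 / lam k - 1 / lam p) * (φ k i - φ k j) ^ 2)
    ∧ (2 / (lam hi) ^ 2
        + ∑ k ∈ Finset.univ.filter (fun k => k ≠ (⟨0, hn⟩ : Fin n) ∧ k ≤ p),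
            (1 / (lam k) ^ 2 - 1 / (lam hi) ^ 2) * (φ k i - φ k j) ^ 2
      ≤ ∑ k ∈ Finset.univ.erase (⟨0, hn⟩ : Fin n), (1 / (lam k) ^ 2) * (φ k i - φ k j) ^ 2)
    ∧ (∑ k ∈ Finset.univ.erase (⟨0, hn⟩ : Fin n), (1 / (lam k) ^ 2) * (φ k i - φ k j) ^ 2
      ≤ 2 / (lam p) ^ 2
        + ∑ k ∈ Finset.univ.filter (fun k => k ≠ (⟨0, hn⟩ : Fin n) ∧ k ≤ p),
            (1 / (lam k) ^ 2 - 1 / (lam p) ^ 2) * (φ k i - φ k j) ^ 2) :=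
  partial_sum_bounds_general n hn lam φ horth hmono hpos hphi1 hi hhi p hp i j hij
end
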